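/- arXiv:1201.0640 — 4 statements merged into one kernel-verified Lean document; each statement's English description precedes it below -/
import Mathlib

section
/- For all real numbers a and b, the matrix F(a,b) is a complex Hadamard matrix of order 6: all of its entries have modulus 1 and its rows are pairwise orthogonal with respect to the standard Hermitian inner product on ℂ^6. -/
noncomputable section

/-- A complex Hadamard matrix: all entries have modulus 1 and the rows are pairwise
orthogonal with respect to the standard Hermitian inner product. -/
def IsComplexHadamard {n : Type*} [Fintype n] (M : Matrix n n ℂ) : Prop :=
  (∀ j k, ‖M j k‖ = 1) ∧
    ∀ j k, j ≠ k → ∑ l, M j l * (starRingEnd ℂ) (M k l) = 0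

/-- `ω = e^{2πi/3}`. -/
def omega3 : ℂ := Complex.exp (2 * Real.pi * Complex.I / 3)

/-- The `3×3` Fourier matrix `F_3 = (ω^{jk})`. -/
def F3 : Matrix (Fin 3) (Fin 3) ℂ := fun j k => omega3 ^ (j.val * k.val)

/-- `D(a,b) = diag(1, e^{2πia}, e^{2πib})`. -/
def Dmat (a b : ℝ) : Matrix (Fin 3) (Fin 3) ℂ :=
  Matrix.diagonal ![1, Complex.exp (2 * Real.pi * Complex.I * a),
    Complex.exp (2 * Real.pi * Complex.I * b)]

/-- The Fourier family `F(a,b) = [[F_3, D(a,b)F_3],[F_3, −D(a,b)F_3]]`. -/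
def Fab (a b : ℝ) : Matrix (Fin 6) (Fin 6) ℂ :=
  Matrix.reindex finSumFinEquiv finSumFinEquiv
    (Matrix.fromBlocks F3 (Dmat a b * F3) F3 (-(Dmat a b * F3)))

/-!
`F(a,b)` is Diţă's construction applied to `F_3`: for a complex Hadamard matrix `A` of order `n`
(i.e. unimodular with `A Aᴴ = n • 1`) and a unitary `D`, the block matrix
`[[A, D A], [A, -D A]]` times its adjoint is `[[2 A Aᴴ, 0], [0, 2 A Aᴴ]]`, because the cross terms
`A Aᴴ - D A Aᴴ Dᴴ` vanish when `A Aᴴ` is scalar. Taking `D` diagonal with unimodular entries keeps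
all entries unimodular. `F_3` is Hadamard since `ω` is a primitive cube root of unity, so each
off-diagonal row product is a geometric sum of a nontrivial root of unity.
-/

open Matrix

section Hadamard

variable {n : Type*} [Fintype n]

lemma mul_conj_eq_one_of_norm_eq_one {z : ℂ} (hz : ‖z‖ = 1) : z * (starRingEnd ℂ) z = 1 := by
  rw [Complex.mul_conj', hz]; norm_num

theorem isComplexHadamard_iff [DecidableEq n] (M : Matrix n n ℂ) :
    IsComplexHadamard M ↔ (∀ j k, ‖M j k‖ = 1) ∧ M * Mᴴ = (Fintype.card n : ℂ) • 1 := by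
  have hrow : ∀ j k, (M * Mᴴ) j k = ∑ l, M j l * (starRingEnd ℂ) (M k l) := fun _ _ => rfl
  refine and_congr_right fun hM => ⟨fun horth => ?_, fun hMM j k hjk => ?_⟩
  · ext j k
    rw [hrow, Matrix.smul_apply, one_apply]
    split_ifs with hjk
    · simp [hjk, mul_conj_eq_one_of_norm_eq_one (hM _ _)]
    · simp [horth j k hjk]
  · rw [← hrow, hMM, Matrix.smul_apply, one_apply_ne hjk, smul_zero]

theorem IsComplexHadamard.reindex {m : Type*} [Fintype m] {M : Matrix m m ℂ}
    (hM : IsComplexHadamard M) (e : m ≃ n) : IsComplexHadamard (Matrix.reindex e e M) := by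
  refine ⟨fun j k => hM.1 _ _, fun j k hjk => ?_⟩
  simp only [reindex_apply, submatrix_apply]
  rw [e.symm.sum_comp (fun l => M (e.symm j) l * (starRingEnd ℂ) (M (e.symm k) l))]
  exact hM.2 _ _ (e.symm.injective.ne hjk)

theorem fromBlocks_mul_conjTranspose_eq_smul_one {α : Type*} [CommRing α] [StarRing α]
    [DecidableEq n] {A D : Matrix n n α} {c : α} (hA : A * Aᴴ = c • 1) (hD : D * Dᴴ = 1) :
    fromBlocks A (D * A) A (-(D * A)) * (fromBlocks A (D * A) A (-(D * A)))ᴴ = (2 * c) • 1 := by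
  have hDA : D * A * (D * A)ᴴ = c • 1 := by
    rw [conjTranspose_mul, mul_assoc, ← mul_assoc A, hA, smul_mul, one_mul, Matrix.mul_smul, hD]
  simp only [fromBlocks_conjTranspose, fromBlocks_multiply, conjTranspose_neg, mul_neg, neg_mul,
    neg_neg, hA, hDA, ← fromBlocks_one, fromBlocks_smul]
  congr 1 <;> simp [two_mul, add_smul]

theorem isComplexHadamard_fromBlocks [DecidableEq n] {A : Matrix n n ℂ} {d : n → ℂ}
    (hA : IsComplexHadamard A) (hd : ∀ i, ‖d i‖ = 1) :
    IsComplexHadamard (fromBlocks A (diagonal d * A) A (-(diagonal d * A))) := by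
  rw [isComplexHadamard_iff] at hA ⊢
  have hD : diagonal d * (diagonal d)ᴴ = 1 := by
    rw [diagonal_conjTranspose, diagonal_mul_diagonal, ← diagonal_one]
    exact congrArg diagonal (funext fun i => mul_conj_eq_one_of_norm_eq_one (hd i))
  refine ⟨?_, ?_⟩
  · rintro (i | i) (j | j) <;> simp [diagonal_mul, hA.1, hd]
  · rw [fromBlocks_mul_conjTranspose_eq_smul_one hA.2 hD, Fintype.card_sum]
    push_cast
    rw [two_mul]

end Hadamard

theorem isComplexHadamard_fourier {ζ : ℂ} {N : ℕ} (hζ : IsPrimitiveRoot ζ N) :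
    IsComplexHadamard (Matrix.of fun j k : Fin N => ζ ^ ((j : ℕ) * k)) := by
  refine ⟨fun j k => ?_, fun j k hjk => ?_⟩
  · simp [hζ.norm'_eq_one j.pos.ne']
  have hζζ : ζ * (starRingEnd ℂ) ζ = 1 := mul_conj_eq_one_of_norm_eq_one (hζ.norm'_eq_one j.pos.ne')
  set x := ζ ^ (j : ℕ) * (starRingEnd ℂ) ζ ^ (k : ℕ)
  have hx : x ^ N = 1 := by
    have hc : (starRingEnd ℂ) ζ ^ N = 1 := by rw [← map_pow, hζ.pow_eq_one, map_one]
    rw [mul_pow, pow_right_comm, pow_right_comm (starRingEnd ℂ ζ), hζ.pow_eq_one, hc, one_pow,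
      one_pow, mul_one]
  have hx1 : x ≠ 1 := by
    intro h
    refine hjk (Fin.ext (hζ.pow_inj j.isLt k.isLt ?_))
    calc ζ ^ (j : ℕ) = x * ζ ^ (k : ℕ) := by
          rw [mul_assoc, ← mul_pow, mul_comm _ ζ, hζζ, one_pow, mul_one]
      _ = ζ ^ (k : ℕ) := by rw [h, one_mul]
  calc ∑ l : Fin N, ζ ^ ((j : ℕ) * l) * (starRingEnd ℂ) (ζ ^ ((k : ℕ) * l))
      = ∑ l ∈ Finset.range N, x ^ l := by
        rw [← Fin.sum_univ_eq_sum_range]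
        simp [x, mul_pow, ← pow_mul]
    _ = 0 := by rw [geom_sum_eq hx1, hx, sub_self, zero_div]

/-- For all real `a, b`, the matrix `F(a,b)` is a complex Hadamard matrix of order 6. -/
theorem Fab_isComplexHadamard (a b : ℝ) : IsComplexHadamard (Fab a b) := by
  have hω : IsPrimitiveRoot omega3 3 := by
    simpa [omega3] using Complex.isPrimitiveRoot_exp 3 (by norm_num)
  have hd : ∀ i, ‖![1, Complex.exp (2 * Real.pi * Complex.I * a),
      Complex.exp (2 * Real.pi * Complex.I * b)] i‖ = 1 := by
    intro i; fin_cases i <;> simp [Complex.norm_exp]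
  exact (isComplexHadamard_fromBlocks (isComplexHadamard_fourier hω) hd).reindex finSumFinEquiv
end
end

section
/- Let M be an m×n matrix with entries in a linearly ordered set. Then there exist a permutation of the rows of M and a permutation of the columns of M such that in the resulting matrix both the sequence of rows and the sequence of columns are nondecreasing with respect to lexicographic order. Consequently, the procedure of repeatedly sorting the rows lexicographically and then the columns lexicographically terminates after finitely many steps. -/
/-!
Among all matrices obtained from `M` by permuting rows and columns, take one that is least
when read row by row, as a lexicographic sequence of lexicographically ordered rows. If two
of its rows were out of order, exchanging them would make it smaller; if two columns `j < j'`
were out of order, then in the first row where they differ the entry in column `j'` is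
smaller, all rows above are unchanged by exchanging the columns, so again it would get smaller.
-/

namespace Matrix

variable {ι κ α : Type*} [LinearOrder ι] [LinearOrder κ] [LinearOrder α]

def rowMajorLex (M : Matrix ι κ α) : Lex (ι → Lex (κ → α)) :=
  toLex fun i => toLex (M i)

theorem rowMajorLex_swap_rows_lt [DecidableEq ι] {M : Matrix ι κ α} {i i' : ι} (hii' : i ≤ i')
    (hlt : toLex (M i') < toLex (M i)) :
    rowMajorLex (M.submatrix (Equiv.swap i i') id) < rowMajorLex M :=
  Pi.lex_desc (f := fun i => toLex (M i)) hii' hlt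

theorem rowMajorLex_swap_cols_lt [DecidableEq κ] {M : Matrix ι κ α} {j j' : κ} (hjj' : j ≤ j')
    (hlt : toLex (Mᵀ j') < toLex (Mᵀ j)) :
    rowMajorLex (M.submatrix id (Equiv.swap j j')) < rowMajorLex M := by
  obtain ⟨i₀, hagree, hlt₀⟩ := hlt
  refine ⟨i₀, fun i hi => ?_, Pi.lex_desc (f := M i₀) hjj' hlt₀⟩
  have hcol : M i j' = M i j := hagree i hi
  have hrow : M i ∘ Equiv.swap j j' = M i := by
    rw [Equiv.comp_swap_eq_update, ← hcol, Function.update_eq_self, hcol, Function.update_eq_self]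
  exact congrArg toLex hrow

theorem monotone_toLex_rows_of_rowMajorLex_le [WellFoundedLT κ] [DecidableEq ι]
    {M : Matrix ι κ α}
    (hmin : ∀ i i', rowMajorLex M ≤ rowMajorLex (M.submatrix (Equiv.swap i i') id)) :
    Monotone fun i => toLex (M i) :=
  fun i i' hii' => not_lt.1 fun hlt => (rowMajorLex_swap_rows_lt hii' hlt).not_ge (hmin i i')

theorem monotone_toLex_cols_of_rowMajorLex_le [WellFoundedLT ι] [DecidableEq κ]
    {M : Matrix ι κ α}
    (hmin : ∀ j j', rowMajorLex M ≤ rowMajorLex (M.submatrix id (Equiv.swap j j'))) :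
    Monotone fun j => toLex (Mᵀ j) :=
  fun j j' hjj' => not_lt.1 fun hlt => (rowMajorLex_swap_cols_lt hjj' hlt).not_ge (hmin j j')

end Matrix

open Matrix in
/-- For any `m×n` matrix over a linearly ordered set there are permutations of the rows
and of the columns after which both the sequence of rows and the sequence of columns
are nondecreasing with respect to the lexicographic order (hence the procedure of
repeatedly sorting rows and columns lexicographically terminates in such a matrix). -/
theorem exists_row_col_perms_lex_sorted {m n : ℕ} {α : Type*} [LinearOrder α]
    (M : Matrix (Fin m) (Fin n) α) :
    ∃ (σ : Equiv.Perm (Fin m)) (τ : Equiv.Perm (Fin n)),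
      Monotone (fun i => toLex (fun j => M (σ i) (τ j))) ∧
      Monotone (fun j => toLex (fun i => M (σ i) (τ j))) := by
  obtain ⟨⟨σ, τ⟩, hmin⟩ := Finite.exists_min fun p : Equiv.Perm (Fin m) × Equiv.Perm (Fin n) =>
    rowMajorLex (M.submatrix p.1 p.2)
  exact ⟨σ, τ,
    monotone_toLex_rows_of_rowMajorLex_le fun i i' => hmin ((Equiv.swap i i').trans σ, τ),
    monotone_toLex_cols_of_rowMajorLex_le fun j j' => hmin (σ, (Equiv.swap j j').trans τ)⟩
end

section
/- Let N be a positive integer and let u = (0, j_1,...,j_5) with j_k ∈ {0,...,N−1} be N-unbiased to v_0 = (0,0,0,0,0,0), i.e., suppose there exist φ_k ∈ I_{j_k} and ψ_k ∈ I_0 = [0, 1/N) with |1 + ∑_{k=1}^5 e^{2πi(φ_k − ψ_k)}| = √6. Then there exist ε_1,...,ε_5 ∈ {0,1} such that the vector (0, (j_1 − ε_1) mod N, ..., (j_5 − ε_5) mod N) belongs to UB_N; that is, there exist θ_k ∈ I_{(j_k−ε_k) mod N} with |1 + ∑_{k=1}^5 e^{2πiθ_k}| = √6. -/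
/-!
The phase `φ - ψ` lies in `((j - 1)/N, (j + 1)/N)`, hence in `I_j` or in `I_{j-1}` after
reducing modulo `1`; since `t ↦ e^{2πit}` is `1`-periodic, the reduced phases give the
same sum. To handle the wrap-around at `j = 0` uniformly, shift by `1` first, so the phase
lies in the cell of index `j + N - ε ≥ 0`, and then reduce that index modulo `N`.
-/

open Set

namespace NUnbiased

def cell (N m : ℕ) : Set ℝ := Ico ((m : ℝ) / N) (((m : ℝ) + 1) / N)

theorem sub_div_mem_cell_mod {N m : ℕ} (hN : 0 < N) {x : ℝ} (hx : x ∈ cell N m) :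
    x - ((m / N : ℕ) : ℝ) ∈ cell N (m % N) := by
  have hN' : (0 : ℝ) < N := by exact_mod_cast hN
  have hm : ((m % N : ℕ) : ℝ) = m - N * ((m / N : ℕ) : ℝ) := by
    rw [eq_sub_iff_add_eq]; exact_mod_cast Nat.mod_add_div m N
  rw [cell, mem_Ico, div_le_iff₀ hN', lt_div_iff₀ hN'] at hx ⊢
  rw [hm]
  constructor <;> linarith

theorem exists_sub_add_one_mem_cell {N j : ℕ} (hN : 0 < N) {φ ψ : ℝ} (hφ : φ ∈ cell N j)
    (hψ : ψ ∈ Ico (0 : ℝ) (1 / N)) :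
    ∃ ε ≤ 1, φ - ψ + 1 ∈ cell N (j + N - ε) := by
  have hN' : (0 : ℝ) < N := by exact_mod_cast hN
  rw [cell, mem_Ico, div_le_iff₀ hN', lt_div_iff₀ hN'] at hφ
  rw [mem_Ico, lt_div_iff₀ hN'] at hψ
  obtain ⟨hφ₀, hφ₁⟩ := hφ
  obtain ⟨hψ₀, hψ₁⟩ := hψ
  have hψN : 0 ≤ ψ * N := mul_nonneg hψ₀ hN'.le
  by_cases hlt : (φ - ψ) * N < j
  · refine ⟨1, le_rfl, ?_⟩
    rw [cell, mem_Ico, div_le_iff₀ hN', lt_div_iff₀ hN', Nat.cast_sub (by omega)]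
    push_cast
    constructor <;> linarith
  · refine ⟨0, zero_le_one, ?_⟩
    rw [cell, mem_Ico, div_le_iff₀ hN', lt_div_iff₀ hN', Nat.sub_zero]
    push_cast
    constructor <;> linarith [not_lt.mp hlt]

theorem exp_two_pi_I_mul_add_int (x : ℝ) (n : ℤ) :
    Complex.exp (2 * Real.pi * Complex.I * ((x + n : ℝ) : ℂ)) =
      Complex.exp (2 * Real.pi * Complex.I * (x : ℂ)) := by
  rw [Complex.ofReal_add, mul_add, Complex.exp_add, Complex.ofReal_intCast, mul_comm _ (n : ℂ),
    Complex.exp_int_mul_two_pi_mul_I, mul_one]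

end NUnbiased

open NUnbiased in
theorem nUnbiased_to_zero_shift_general (N : ℕ) (hN : 0 < N)
    (j : Fin 5 → ℕ) (φ ψ : Fin 5 → ℝ)
    (hφ : ∀ k, φ k ∈ Set.Ico ((j k : ℝ) / N) (((j k : ℝ) + 1) / N))
    (hψ : ∀ k, ψ k ∈ Set.Ico (0 : ℝ) (1 / N))
    (h : ‖(1 + ∑ k, Complex.exp (2 * Real.pi * Complex.I * ((φ k - ψ k : ℝ) : ℂ)))‖
      = Real.sqrt 6) :
    ∃ ε : Fin 5 → ℕ, (∀ k, ε k ≤ 1) ∧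
      ∃ θ : Fin 5 → ℝ,
        (∀ k, θ k ∈ Set.Ico ((((j k + N - ε k) % N : ℕ) : ℝ) / N)
          (((((j k + N - ε k) % N : ℕ) : ℝ) + 1) / N)) ∧
        ‖(1 + ∑ k, Complex.exp (2 * Real.pi * Complex.I * ((θ k : ℝ) : ℂ)))‖
          = Real.sqrt 6 := by
  choose ε hε hshift using fun k => exists_sub_add_one_mem_cell hN (hφ k) (hψ k)
  set q : Fin 5 → ℕ := fun k => (j k + N - ε k) / N
  refine ⟨ε, hε, fun k => φ k - ψ k + 1 - q k,
    fun k => sub_div_mem_cell_mod hN (hshift k), ?_⟩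
  rw [← h]
  congr 2
  refine Finset.sum_congr rfl fun k _ => ?_
  have hθ : φ k - ψ k + 1 - q k = φ k - ψ k + ((1 - q k : ℤ) : ℝ) := by push_cast; ring
  beta_reduce
  rw [hθ, exp_two_pi_I_mul_add_int]

/-- If `u = (0, j 0, …, j 4)` is `N`-unbiased to `v₀ = (0,…,0)`, i.e. there are
phases `φ k ∈ I_{j k} = [j k/N, (j k+1)/N)` and `ψ k ∈ I_0 = [0, 1/N)` with
`|1 + ∑ e^{2πi(φ_k − ψ_k)}| = √6`, then there are `ε k ∈ {0,1}` such that the vector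
with coordinates `(j k − ε k) mod N` belongs to `UB_N`: there exist phases
`θ k ∈ I_{(j k − ε k) mod N}` with `|1 + ∑ e^{2πiθ_k}| = √6`. -/
theorem nUnbiased_to_zero_shift (N : ℕ) (hN : 0 < N)
    (j : Fin 5 → ℕ) (hj : ∀ k, j k < N) (φ ψ : Fin 5 → ℝ)
    (hφ : ∀ k, φ k ∈ Set.Ico ((j k : ℝ) / N) (((j k : ℝ) + 1) / N))
    (hψ : ∀ k, ψ k ∈ Set.Ico (0 : ℝ) (1 / N))
    (h : ‖(1 + ∑ k, Complex.exp (2 * Real.pi * Complex.I * ((φ k - ψ k : ℝ) : ℂ)))‖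
      = Real.sqrt 6) :
    ∃ ε : Fin 5 → ℕ, (∀ k, ε k ≤ 1) ∧
      ∃ θ : Fin 5 → ℝ,
        (∀ k, θ k ∈ Set.Ico ((((j k + N - ε k) % N : ℕ) : ℝ) / N)
          (((((j k + N - ε k) % N : ℕ) : ℝ) + 1) / N)) ∧
        ‖(1 + ∑ k, Complex.exp (2 * Real.pi * Complex.I * ((θ k : ℝ) : ℂ)))‖
          = Real.sqrt 6 :=
  nUnbiased_to_zero_shift_general N hN j φ ψ hφ hψ h
end

section
/- Any family of pairwise mutually unbiased orthonormal bases of ℂ^d contains at most d + 1 bases. -/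
/-!
For a unit vector `v` the rank-one operator `P v = rankOne 𝕜 v v` satisfies
`⟪w, P v w⟫ = ‖⟪w, v⟫‖ ^ 2` and `trace (P v) = 1`. Fix an index `j₀`. For every basis `B` in the
family and every `j ≠ j₀`, the operator `P (B j) - P (B j₀)` is traceless, and the functionals
`T ↦ ⟪B k, T (B k)⟫` are dual to these operators: within one basis orthonormality gives `δ_kj`,
while against another basis both overlaps have the same modulus and cancel. Hence for a family
of `n` bases these `n (d - 1)` operators, together with the identity, are linearly independent
in `End E`, so `n (d - 1) + 1 ≤ d ^ 2`, i.e. `n ≤ d + 1`.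
-/

noncomputable section

/-- Two families of vectors in `ℂ^d` are unbiased if all pairwise inner products
have modulus `1/√d`. -/
def Unbiased {d : ℕ} (A B : Fin d → EuclideanSpace ℂ (Fin d)) : Prop :=
  ∀ j k, ‖(inner ℂ (A j) (B k) : ℂ)‖ = 1 / Real.sqrt d

open Module LinearMap InnerProductSpace

theorem LinearIndependent.of_pairing_eq_ite {ι R M : Type*} [CommRing R] [AddCommGroup M]
    [Module R M] [DecidableEq ι] {v : ι → M} (f : ι → M →ₗ[R] R)
    (h : ∀ i j, f i (v j) = if i = j then 1 else 0) : LinearIndependent R v :=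
  .of_comp (pi f) <| by
    have hpi : pi f ∘ v = fun j => Pi.single j 1 := by
      ext j i
      simp [h, Pi.single_apply]
    rw [hpi]
    exact Pi.linearIndependent_single_one ι R

theorem ENat.le_add_one_of_mul_sub_one_add_one_le {x : ℕ∞} {d : ℕ} (hd : 2 ≤ d)
    (h : x * ((d - 1 : ℕ) : ℕ∞) + 1 ≤ ((d * d : ℕ) : ℕ∞)) : x ≤ d + 1 := by
  have hd₁ : ((d - 1 : ℕ) : ℕ∞) ≠ 0 := by norm_cast; omega
  induction x using ENat.recTopCoe with
  | top => rw [ENat.top_mul hd₁, top_add, top_le_iff] at h; exact absurd h (ENat.natCast_ne_top _)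
  | coe n =>
    norm_cast at h ⊢
    obtain ⟨e, rfl⟩ : ∃ e, d = e + 2 := ⟨d - 2, by omega⟩
    rw [show e + 2 - 1 = e + 1 from rfl] at h
    nlinarith

section

variable {𝕜 E : Type*} [RCLike 𝕜] [NormedAddCommGroup E] [InnerProductSpace 𝕜 E]

def innerApplyₗ (v : E) : Module.End 𝕜 E →ₗ[𝕜] 𝕜 := innerₛₗ 𝕜 v ∘ₗ applyₗ v

theorem innerApplyₗ_rankOne (v w : E) :
    innerApplyₗ v (rankOne 𝕜 w w : Module.End 𝕜 E) = (‖⟪v, w⟫_𝕜‖ : 𝕜) ^ 2 := by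
  simp [innerApplyₗ, inner_smul_right, ← RCLike.conj_mul, inner_conj_symm]

theorem innerApplyₗ_rankOne_sub_of_orthonormal {ι : Type*} [DecidableEq ι] {v : ι → E}
    (hv : Orthonormal 𝕜 v) {j₀ k : ι} (hk : k ≠ j₀) (j : ι) :
    innerApplyₗ (v k) (rankOne 𝕜 (v j) (v j) - rankOne 𝕜 (v j₀) (v j₀) : Module.End 𝕜 E) =
      if k = j then 1 else 0 := by
  simp only [map_sub, innerApplyₗ_rankOne, orthonormal_iff_ite.1 hv, if_neg hk]
  split_ifs <;> simp

variable {ι : Type*} [Fintype ι]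

theorem linearIndependent_rankOne_sub {S : Set (OrthonormalBasis ι 𝕜 E)}
    (hS : S.Pairwise fun B C => ∀ j k k', ‖⟪B j, C k⟫_𝕜‖ = ‖⟪B j, C k'⟫_𝕜‖) (j₀ : ι) :
    LinearIndependent 𝕜 fun p : S × {j // j ≠ j₀} =>
      (rankOne 𝕜 (p.1.1 p.2) (p.1.1 p.2) - rankOne 𝕜 (p.1.1 j₀) (p.1.1 j₀) : Module.End 𝕜 E) := by
  classical
  refine .of_pairing_eq_ite (fun p => innerApplyₗ (p.1.1 p.2)) ?_
  rintro ⟨B, k, hk⟩ ⟨C, j, -⟩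
  by_cases hBC : B = C
  · subst hBC
    simp [innerApplyₗ_rankOne_sub_of_orthonormal B.1.orthonormal hk]
  · simp [innerApplyₗ_rankOne, hS B.2 C.2 (Subtype.coe_ne_coe.2 hBC) k j j₀, hBC]

theorem id_notMem_span_rankOne_sub [FiniteDimensional 𝕜 E] (hE : finrank 𝕜 E ≠ 0)
    (S : Set (OrthonormalBasis ι 𝕜 E)) (j₀ : ι) :
    LinearMap.id ∉ Submodule.span 𝕜 (Set.range fun p : S × {j // j ≠ j₀} =>
      (rankOne 𝕜 (p.1.1 p.2) (p.1.1 p.2) - rankOne 𝕜 (p.1.1 j₀) (p.1.1 j₀) : Module.End 𝕜 E)) := by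
  intro h
  have htrace : LinearMap.id ∈ ker (trace 𝕜 E) := by
    refine Submodule.span_le.2 (Set.range_subset_iff.2 fun p => ?_) h
    simp [trace_rankOne, inner_self_eq_norm_sq_to_K, p.1.1.orthonormal.1 _]
  simp [trace_id, hE] at htrace

theorem encard_le_finrank_add_one [FiniteDimensional 𝕜 E] (hE : 2 ≤ finrank 𝕜 E)
    (S : Set (OrthonormalBasis ι 𝕜 E))
    (hS : S.Pairwise fun B C => ∀ j k k', ‖⟪B j, C k⟫_𝕜‖ = ‖⟪B j, C k'⟫_𝕜‖) :
    S.encard ≤ finrank 𝕜 E + 1 := by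
  classical
  obtain rfl | ⟨B₀, -⟩ := S.eq_empty_or_nonempty
  · simp
  have hι : Fintype.card ι = finrank 𝕜 E := (finrank_eq_card_basis B₀.toBasis).symm
  obtain ⟨j₀⟩ : Nonempty ι := Fintype.card_pos_iff.1 (by omega)
  have hcard := ((linearIndependent_rankOne_sub hS j₀).option
    (id_notMem_span_rankOne_sub (by omega) S j₀)).cardinalMk_le_finrank
  have hJ : Fintype.card {j // j ≠ j₀} = finrank 𝕜 E - 1 := by simp [hι]
  rw [finrank_linearMap, ← Cardinal.toENat_le_natCast, Cardinal.mk_option, map_add, map_one,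
    ← ENat.card, ENat.card_prod, ENat.card_eq_coe_fintype_card (α := {j // j ≠ j₀}), hJ] at hcard
  exact ENat.le_add_one_of_mul_sub_one_add_one_le hE hcard

end

/-- Any family of pairwise mutually unbiased orthonormal bases of `ℂ^d` (with `d ≥ 2`)
contains at most `d + 1` bases. -/
theorem card_mub_le (d : ℕ) (hd : 2 ≤ d)
    (S : Set (OrthonormalBasis (Fin d) ℂ (EuclideanSpace ℂ (Fin d))))
    (hS : S.Pairwise fun B C => Unbiased ⇑B ⇑C) :
    S.encard ≤ d + 1 := by
  have h := encard_le_finrank_add_one (𝕜 := ℂ) (by rwa [finrank_euclideanSpace_fin]) S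
    (hS.mono' fun B C h j k k' => (h j k).trans (h j k').symm)
  rwa [finrank_euclideanSpace_fin] at h
end
end
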